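/- Coupling bound for mixtures: for any coupling π of finitely supported distributions ν, ν' on Y, and any Markov kernel M from Y to probability measures on Z, D_{e^ε}(νM ‖ ν'M) ≤ Σ_{y,y'} π(y,y') · D_{e^ε}(M(y)‖M(y')), where νM = Σ_y ν(y) M(y). In particular D_{e^ε}(νM‖ν'M) ≤ Σ_{y,y'} π(y,y') δ_{M,d_Y(y,y')}(ε) when D_{e^ε}(M(y)‖M(y')) ≤ δ_{M,k}(ε) for d_Y(y,y') = k. -/
import Mathlib

open MeasureTheory Real

/-- Hockey-stick divergence `D_α(μ‖μ') = sup_E (μ(E) - α μ'(E))`. -/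
noncomputable def hsDiv {Z : Type*} [MeasurableSpace Z] (α : ℝ) (μ μ' : Measure Z) : ℝ :=
  sSup {d : ℝ | ∃ E : Set Z, MeasurableSet E ∧ d = (μ E).toReal - α * (μ' E).toReal}

lemma hsDiv_bdd {Z : Type*} [MeasurableSpace Z] {α : ℝ} (hα : 0 ≤ α)
    (μ μ' : Measure Z) [IsProbabilityMeasure μ] :
    BddAbove {d : ℝ | ∃ E : Set Z, MeasurableSet E ∧ d = (μ E).toReal - α * (μ' E).toReal} := by
  refine ⟨1, ?_⟩
  rintro x ⟨E, hE, rfl⟩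
  have h1 : (μ E).toReal ≤ 1 := by
    have := prob_le_one (μ := μ) (s := E)
    simpa using ENNReal.toReal_mono ENNReal.one_ne_top this
  have h2 : 0 ≤ α * (μ' E).toReal := mul_nonneg hα ENNReal.toReal_nonneg
  linarith

lemma hsDiv_nonneg {Z : Type*} [MeasurableSpace Z] {α : ℝ} (hα : 0 ≤ α)
    (μ μ' : Measure Z) [IsProbabilityMeasure μ] : 0 ≤ hsDiv α μ μ' := by
  apply le_csSup (hsDiv_bdd hα μ μ')
  exact ⟨∅, MeasurableSet.empty, by simp⟩

/-- Coupling bound for mixtures: for any coupling `pl` of `(ν, ν')` and Markov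
kernel `M`, `D_{e^ε}(νM ‖ ν'M) ≤ Σ_{y,y'} pl(y,y') D_{e^ε}(M(y)‖M(y'))`; in
particular it is bounded by `Σ_{y,y'} pl(y,y') δ_{M,d(y,y')}(ε)` whenever
`D_{e^ε}(M(y)‖M(y')) ≤ δk (d y y')`. -/
theorem coupling_bound_for_mixtures {Y Z : Type*} [Fintype Y] [MeasurableSpace Z]
    (ν ν' : Y → ℝ) (hν : ∀ y, 0 ≤ ν y) (hν' : ∀ y, 0 ≤ ν' y)
    (hν1 : ∑ y, ν y = 1) (hν'1 : ∑ y, ν' y = 1)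
    (M : Y → Measure Z) (hM : ∀ y, IsProbabilityMeasure (M y))
    (pl : Y → Y → ℝ) (hpl : ∀ y y', 0 ≤ pl y y')
    (hmarg1 : ∀ y, ∑ y', pl y y' = ν y) (hmarg2 : ∀ y', ∑ y, pl y y' = ν' y')
    (ε : ℝ) (hε : 0 ≤ ε)
    (d : Y → Y → ℕ) (δk : ℕ → ℝ)
    (hδk : ∀ y y', hsDiv (exp ε) (M y) (M y') ≤ δk (d y y')) :
    hsDiv (exp ε) (∑ y, ENNReal.ofReal (ν y) • M y)
        (∑ y, ENNReal.ofReal (ν' y) • M y)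
      ≤ ∑ y, ∑ y', pl y y' * hsDiv (exp ε) (M y) (M y')
    ∧ hsDiv (exp ε) (∑ y, ENNReal.ofReal (ν y) • M y)
        (∑ y, ENNReal.ofReal (ν' y) • M y)
      ≤ ∑ y, ∑ y', pl y y' * δk (d y y') := by
  have hα : (0:ℝ) ≤ exp ε := (exp_pos ε).le
  haveI := hM
  -- key: first bound
  have key : hsDiv (exp ε) (∑ y, ENNReal.ofReal (ν y) • M y)
      (∑ y, ENNReal.ofReal (ν' y) • M y)
      ≤ ∑ y, ∑ y', pl y y' * hsDiv (exp ε) (M y) (M y') := by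
    apply Real.sSup_le
    · rintro x ⟨E, hE, rfl⟩
      have happ : ∀ (w : Y → ℝ) (hw : ∀ y, 0 ≤ w y),
          ((∑ y, ENNReal.ofReal (w y) • M y) E).toReal = ∑ y, w y * ((M y) E).toReal := by
        intro w hw
        rw [Measure.finset_sum_apply]
        rw [ENNReal.toReal_sum]
        · refine Finset.sum_congr rfl fun y _ => ?_
          rw [Measure.smul_apply, smul_eq_mul, ENNReal.toReal_mul,
            ENNReal.toReal_ofReal (hw y)]
        · intro y _
          rw [Measure.smul_apply, smul_eq_mul]
          exact ENNReal.mul_ne_top ENNReal.ofReal_ne_top (measure_ne_top _ _)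
      rw [happ ν hν, happ ν' hν']
      have e1 : ∑ y, ν y * ((M y) E).toReal
          = ∑ y, ∑ y', pl y y' * ((M y) E).toReal := by
        refine Finset.sum_congr rfl fun y _ => ?_
        rw [← hmarg1 y, Finset.sum_mul]
      have e2 : ∑ y, ν' y * ((M y) E).toReal
          = ∑ y, ∑ y', pl y y' * ((M y') E).toReal := by
        rw [Finset.sum_comm]
        refine Finset.sum_congr rfl fun y' _ => ?_
        rw [← hmarg2 y', Finset.sum_mul]
      rw [e1, e2, Finset.mul_sum, ← Finset.sum_sub_distrib]
      refine Finset.sum_le_sum fun y _ => ?_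
      rw [Finset.mul_sum, ← Finset.sum_sub_distrib]
      refine Finset.sum_le_sum fun y' _ => ?_
      have : pl y y' * ((M y) E).toReal - exp ε * (pl y y' * ((M y') E).toReal)
          = pl y y' * (((M y) E).toReal - exp ε * ((M y') E).toReal) := by ring
      rw [this]
      refine mul_le_mul_of_nonneg_left ?_ (hpl y y')
      exact le_csSup (hsDiv_bdd hα (M y) (M y')) ⟨E, hE, rfl⟩
    · exact Finset.sum_nonneg fun y _ => Finset.sum_nonneg fun y' _ =>
        mul_nonneg (hpl y y') (hsDiv_nonneg hα (M y) (M y'))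
  refine ⟨key, key.trans ?_⟩
  exact Finset.sum_le_sum fun y _ => Finset.sum_le_sum fun y' _ =>
    mul_le_mul_of_nonneg_left (hδk y y') (hpl y y')
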